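/- For t > 0, the characteristic function φ(t) of the cube of a standard normal variable satisfies φ(t) = (√(2π)/3^{1/3})·t^{-1/3}·exp(t^{-2}/108)·Ai(t^{-4/3}/(4·3^{4/3})), where Ai is the Airy function. -/

import Mathlib

open MeasureTheory Real

/-- The Airy function, via `Ai(x) = (1/π) e^{-(2/3)x^{3/2}} ∫_0^∞ e^{-√x u²} cos(u³/3) du`
(valid for `x > 0`). -/
noncomputable def airyAi (x : ℝ) : ℝ :=
  (1 / π) * Real.exp (-(2 / 3) * x ^ ((3 : ℝ) / 2)) *
    ∫ u in Set.Ioi (0 : ℝ), Real.exp (-Real.sqrt x * u ^ 2) * Real.cos (u ^ 3 / 3)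

/-- The characteristic function of the cube of a standard normal variable,
`φ(t) = √(2/π) ∫_0^∞ e^{-x²/2} cos(t x³) dx`. -/
noncomputable def phiCubeR (t : ℝ) : ℝ :=
  Real.sqrt (2 / π) * ∫ x in Set.Ioi (0 : ℝ), Real.exp (-x ^ 2 / 2) * Real.cos (t * x ^ 3)

/-!
Substituting `u = (3t)^{1/3} x` in the integral defining `Ai(y)`, `y = t^{-4/3}/(4·3^{4/3})`,
turns `e^{-√y u²} cos(u³/3)` into `e^{-x²/2} cos(t x³)`, because `√y (3t)^{2/3} = 1/2`;
the exponential prefactors cancel since `(2/3) y^{3/2} = t^{-2}/108`.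
-/

noncomputable def gaussCubeCosIntegral (α β : ℝ) : ℝ :=
  ∫ x in Set.Ioi (0 : ℝ), Real.exp (-α * x ^ 2) * Real.cos (β * x ^ 3)

theorem gaussCubeCosIntegral_mul_pow (α β : ℝ) {b : ℝ} (hb : 0 < b) :
    gaussCubeCosIntegral (α * b ^ 2) (β * b ^ 3) = b⁻¹ * gaussCubeCosIntegral α β := by
  have h := integral_comp_mul_left_Ioi (fun u => Real.exp (-α * u ^ 2) * Real.cos (β * u ^ 3)) 0 hb
  rw [mul_zero, smul_eq_mul] at h
  rw [gaussCubeCosIntegral, gaussCubeCosIntegral, ← h]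
  congr 1 with x
  ring_nf

theorem phiCubeR_eq (t : ℝ) : phiCubeR t = √(2 / π) * gaussCubeCosIntegral (1 / 2) t := by
  rw [phiCubeR, gaussCubeCosIntegral]
  congr 2 with x
  ring_nf

theorem airyAi_eq (x : ℝ) :
    airyAi x = π⁻¹ * Real.exp (-(2 / 3) * x ^ ((3 : ℝ) / 2)) * gaussCubeCosIntegral √x (1 / 3) := by
  rw [airyAi, gaussCubeCosIntegral, one_div]
  congr 2 with u
  ring_nf

theorem Real.rpow_intCast_div {x : ℝ} (hx : 0 ≤ x) (n : ℤ) (d : ℝ) :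
    x ^ ((n : ℝ) / d) = (x ^ (1 / d)) ^ n := by
  rw [← rpow_intCast, ← rpow_mul hx, one_div_mul_eq_div]

theorem Real.rpow_one_third_pow_three {x : ℝ} (hx : 0 ≤ x) : (x ^ ((1 : ℝ) / 3)) ^ 3 = x := by
  simpa using (rpow_intCast_div hx 3 3).symm

theorem airyArg_eq_sq {t : ℝ} (ht : 0 < t) : t ^ (-(4 : ℝ) / 3) / (4 * (3 : ℝ) ^ ((4 : ℝ) / 3))
    = (1 / (2 * (t ^ ((1 : ℝ) / 3)) ^ 2 * ((3 : ℝ) ^ ((1 : ℝ) / 3)) ^ 2)) ^ 2 := by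
  have ht' := rpow_intCast_div ht.le (-4) 3
  have h3 := rpow_intCast_div (by norm_num : (0 : ℝ) ≤ 3) 4 3
  push_cast at ht' h3
  rw [ht', h3]
  have : 0 < t ^ ((1 : ℝ) / 3) := by positivity
  field_simp
  ring

theorem sqrt_airyArg_mul_sq {t : ℝ} (ht : 0 < t) :
    √(t ^ (-(4 : ℝ) / 3) / (4 * (3 : ℝ) ^ ((4 : ℝ) / 3))) * ((3 * t) ^ ((1 : ℝ) / 3)) ^ 2 = 1 / 2 := by
  have : 0 < t ^ ((1 : ℝ) / 3) := by positivity
  rw [airyArg_eq_sq ht, sqrt_sq (by positivity), mul_rpow (by norm_num) ht.le]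
  field_simp

theorem airyArg_rpow_three_halves {t : ℝ} (ht : 0 < t) :
    (t ^ (-(4 : ℝ) / 3) / (4 * (3 : ℝ) ^ ((4 : ℝ) / 3))) ^ ((3 : ℝ) / 2) = t ^ (-(2 : ℝ)) / 72 := by
  have : 0 < t ^ ((1 : ℝ) / 3) := by positivity
  rw [airyArg_eq_sq ht, ← rpow_natCast _ 2, ← rpow_mul (by positivity),
    show ((2 : ℕ) : ℝ) * (3 / 2) = (3 : ℕ) by norm_num, rpow_natCast,
    show -(2 : ℝ) = ((-2 : ℤ) : ℝ) by norm_num, rpow_intCast]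
  calc (1 / (2 * (t ^ ((1 : ℝ) / 3)) ^ 2 * ((3 : ℝ) ^ ((1 : ℝ) / 3)) ^ 2)) ^ 3
      = 1 / (8 * ((t ^ ((1 : ℝ) / 3)) ^ 3) ^ 2 * (((3 : ℝ) ^ ((1 : ℝ) / 3)) ^ 3) ^ 2) := by ring
    _ = t ^ (-2 : ℤ) / 72 := by
      rw [rpow_one_third_pow_three ht.le, rpow_one_third_pow_three (by norm_num)]
      field_simp
      norm_num

theorem rpow_neg_one_third_mul {t : ℝ} (ht : 0 < t) :
    t ^ (-(1 : ℝ) / 3) * (3 * t) ^ ((1 : ℝ) / 3) = (3 : ℝ) ^ ((1 : ℝ) / 3) := by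
  rw [mul_rpow (by norm_num) ht.le, mul_left_comm, ← rpow_add ht]
  norm_num

/-- For `t > 0`,
`φ(t) = (√(2π)/3^{1/3}) t^{-1/3} e^{t^{-2}/108} Ai(t^{-4/3}/(4·3^{4/3}))`. -/
theorem stmt_14 (t : ℝ) (ht : 0 < t) :
    phiCubeR t = (Real.sqrt (2 * π) / (3 : ℝ) ^ ((1 : ℝ) / 3)) * t ^ (-(1 : ℝ) / 3)
      * Real.exp (t ^ (-(2 : ℝ)) / 108)
      * airyAi (t ^ (-(4 : ℝ) / 3) / (4 * (3 : ℝ) ^ ((4 : ℝ) / 3))) := by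
  set y := t ^ (-(4 : ℝ) / 3) / (4 * (3 : ℝ) ^ ((4 : ℝ) / 3))
  set s := (3 * t) ^ ((1 : ℝ) / 3)
  have hs : 0 < s := by positivity
  have hscale := gaussCubeCosIntegral_mul_pow √y (1 / 3) hs
  rw [sqrt_airyArg_mul_sq ht, rpow_one_third_pow_three (by positivity),
    show (1 : ℝ) / 3 * (3 * t) = t by ring] at hscale
  have hexp : Real.exp (t ^ (-(2 : ℝ)) / 108) * Real.exp (-(2 / 3) * (t ^ (-(2 : ℝ)) / 72)) = 1 := by
    rw [← Real.exp_add, ← Real.exp_zero]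
    ring_nf
  have hsqrt : √(2 / π) = √(2 * π) / π := by
    rw [sqrt_mul zero_le_two, mul_div_assoc, sqrt_div_self', sqrt_div zero_le_two, div_eq_mul_one_div]
  have hk : t ^ (-(1 : ℝ) / 3) = (3 : ℝ) ^ ((1 : ℝ) / 3) / s :=
    eq_div_of_mul_eq hs.ne' (rpow_neg_one_third_mul ht)
  rw [phiCubeR_eq, airyAi_eq, airyArg_rpow_three_halves ht, hscale, hsqrt, hk]
  calc _ = √(2 * π) / (3 : ℝ) ^ ((1 : ℝ) / 3) * ((3 : ℝ) ^ ((1 : ℝ) / 3) / s)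
        * (Real.exp (t ^ (-(2 : ℝ)) / 108) * Real.exp (-(2 / 3) * (t ^ (-(2 : ℝ)) / 72)))
        * (π⁻¹ * gaussCubeCosIntegral √y (1 / 3)) := by
          rw [hexp]
          field_simp
    _ = _ := by ring
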